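/- Let 0 < p < 1. For a p-atom a on I_M, n ≥ 2^M, and x ∈ I_s \ I_{s+1} with [n] ≤ s ≤ M−1, one has |S_n a(x)| / 2^{ρ(n)(1/p−1)} ≤ c_p 2^{[n](1/p−1)+s} ≤ c_p 2^{s/p}, using |D_n(x+t)| ≤ c 2^s for t ∈ I_M and M ≤ |n|. -/

import Mathlib

open MeasureTheory Finset ENNReal NNReal

noncomputable section

/-- The dyadic (Walsh) group `G = (ℤ/2)^ℕ`. -/
abbrev G : Type := ℕ → ZMod 2

/-- The dyadic interval `I_n(x)`: points agreeing with `x` in the first `n` coordinates. -/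
def cyl (n : ℕ) (x : G) : Set G := {y : G | ∀ j < n, y j = x j}

/-- The dyadic interval `I_n = I_n(0)`. -/
def Icyl (n : ℕ) : Set G := cyl n 0

/-- The `k`-th Rademacher function `r_k(x) = (-1)^{x_k}`. -/
def rad (k : ℕ) (x : G) : ℝ := (-1 : ℝ) ^ (x k).val

/-- The `n`-th Walsh function `w_n = ∏_k r_k^{n_k}`, `n_k` the binary digits of `n`. -/
def walsh (n : ℕ) (x : G) : ℝ :=
  ∏ k ∈ Finset.range n, if n.testBit k then rad k x else 1

/-- The `n`-th Walsh–Dirichlet kernel `D_n = ∑_{k<n} w_k`. -/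
def dirichlet (n : ℕ) (x : G) : ℝ := ∑ k ∈ Finset.range n, walsh k x

/-- `k`-th Walsh–Fourier coefficient of `f` with respect to the measure `μ`. -/
def coef (μ : Measure G) (f : G → ℝ) (k : ℕ) : ℝ := ∫ x, f x * walsh k x ∂μ

/-- `n`-th partial sum of the Walsh–Fourier series of `f`. -/
def psum (μ : Measure G) (n : ℕ) (f : G → ℝ) (x : G) : ℝ :=
  ∑ k ∈ Finset.range n, coef μ f k * walsh k x

/-- `|n|`: position of the highest nonzero binary digit of `n`. -/
def hi (n : ℕ) : ℕ := Nat.log 2 n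

/-- `[n]`: position of the lowest nonzero binary digit of `n`. -/
def lo (n : ℕ) : ℕ := padicValNat 2 n

/-- `ρ(n) = |n| - [n]`. -/
def rho (n : ℕ) : ℕ := hi n - lo n

/-- `e_m ∈ G`: the element with `m`-th coordinate `1` and all others `0`. -/
def eG (m : ℕ) : G := fun j => if j = m then 1 else 0

/-- `a` is a `p`-atom supported on the dyadic interval `I_M`. -/
def IsPAtom (μ : Measure G) (p : ℝ) (M : ℕ) (a : G → ℝ) : Prop :=
  Measurable a ∧ (∀ x, x ∉ Icyl M → a x = 0) ∧ (∫ x, a x ∂μ) = 0 ∧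
    ∀ x, |a x| ≤ (2 : ℝ) ^ ((M : ℝ) / p)

/-- The hypothesis that `μ` is the Haar (fair-coin product) probability measure on `G`,
characterized by its values on dyadic intervals. -/
def IsHaarG (μ : Measure G) : Prop := ∀ (n : ℕ) (x : G), μ (cyl n x) = 2⁻¹ ^ n

/-- The `p`-th power of the `H_p` quasi-norm: `∫ (sup_n |S_{2^n} f|)^p dμ`. -/
def HpP (μ : Measure G) (p : ℝ) (f : G → ℝ) : ℝ≥0∞ :=
  ∫⁻ x, (⨆ n : ℕ, ENNReal.ofReal |psum μ (2 ^ n) f x|) ^ p ∂μ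

/-- The weighted maximal operator `sup_n |S_n f| / 2^{ρ(n)(1/p-1)}` (with values in `ℝ≥0∞`). -/
def maxW (μ : Measure G) (p : ℝ) (f : G → ℝ) (x : G) : ℝ≥0∞ :=
  ⨆ n : ℕ, ENNReal.ofReal (|psum μ n f x| / 2 ^ ((rho n : ℝ) * (1 / p - 1)))

/-- The `p`-th power of the weak-`L_p` quasi-norm of a `ℝ≥0∞`-valued function. -/
def weakLpP (μ : Measure G) (p : ℝ) (g : G → ℝ≥0∞) : ℝ≥0∞ :=
  ⨆ t : ℝ≥0, (t : ℝ≥0∞) ^ p * μ {x | (t : ℝ≥0∞) < g x}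

lemma zmod2_cases : ∀ a : ZMod 2, a = 0 ∨ a = 1 := by decide

lemma rad_add (k : ℕ) (x y : G) : rad k (x + y) = rad k x * rad k y := by
  unfold rad
  have : ∀ a b : ZMod 2, (-1:ℝ)^((a+b).val) = (-1)^a.val * (-1)^b.val := by
    intro a b
    rcases zmod2_cases a with ha | ha <;> rcases zmod2_cases b with hb | hb <;>
      subst ha <;> subst hb <;>
      norm_num [show ((1:ZMod 2)+1).val = 0 by decide, show ((2:ZMod 2)).val = 0 by decide, show (1:ZMod 2).val = 1 by decide]
  simpa using this (x k) (y k)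

lemma abs_rad (k : ℕ) (x : G) : |rad k x| = 1 := by
  unfold rad; rw [abs_pow, abs_neg, abs_one, one_pow]

lemma rad_eq_neg_one {s : ℕ} {x : G} (h : x s = 1) : rad s x = -1 := by
  unfold rad; rw [h]; norm_num [show (1:ZMod 2).val = 1 from rfl]

lemma measurable_rad (k : ℕ) : Measurable (rad k) := by
  have : rad k = (fun a : ZMod 2 => (-1:ℝ)^a.val) ∘ (fun x : G => x k) := rfl
  rw [this]
  exact Measurable.comp (by exact measurable_from_top) (measurable_pi_apply k)

lemma walsh_eq_prod {n L : ℕ} (h : n ≤ L) (x : G) :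
    walsh n x = ∏ k ∈ range L, if n.testBit k then rad k x else 1 := by
  unfold walsh
  refine Finset.prod_subset (range_subset_range.2 h) ?_
  intro k _ hk
  simp only [mem_range, not_lt] at hk
  have : n.testBit k = false :=
    Nat.testBit_lt_two_pow (lt_of_le_of_lt hk (Nat.lt_two_pow_self))
  simp [this]

lemma abs_walsh_le_one (n : ℕ) (x : G) : |walsh n x| ≤ 1 := by
  unfold walsh
  calc |∏ k ∈ range n, if n.testBit k then rad k x else 1|
      = ∏ k ∈ range n, |if n.testBit k then rad k x else 1| := Finset.abs_prod _ _
    _ ≤ ∏ k ∈ range n, 1 := by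
        refine Finset.prod_le_prod (fun i _ => abs_nonneg _) (fun i _ => ?_)
        by_cases hb : n.testBit i <;> simp [hb, abs_rad, le_refl]
    _ = 1 := by simp

lemma measurable_walsh (n : ℕ) : Measurable (walsh n) := by
  unfold walsh
  refine Finset.measurable_prod _ (fun k _ => ?_)
  by_cases hb : n.testBit k <;> simp [hb, measurable_rad, measurable_const]

lemma walsh_add (k : ℕ) (x y : G) : walsh k (x + y) = walsh k x * walsh k y := by
  unfold walsh
  rw [← Finset.prod_mul_distrib]
  refine Finset.prod_congr rfl (fun i _ => ?_)
  by_cases hb : k.testBit i <;> simp [hb, rad_add]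

lemma walsh_two_pow_add {j k : ℕ} (hk : k < 2 ^ j) (x : G) :
    walsh (2 ^ j + k) x = rad j x * walsh k x := by
  have hj : j < 2 ^ j + k := lt_of_lt_of_le (Nat.lt_two_pow_self) (Nat.le_add_right _ _)
  rw [walsh_eq_prod (le_refl (2 ^ j + k)) x,
      walsh_eq_prod (le_trans hk.le (Nat.le_add_right _ _) : k ≤ 2 ^ j + k) x]
  have key : ∀ i ∈ range (2 ^ j + k),
      (if (2 ^ j + k).testBit i then rad i x else 1)
        = (if i = j then rad j x else 1) * (if k.testBit i then rad i x else 1) := by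
    intro i _
    rcases lt_trichotomy i j with hij | hij | hij
    · rw [Nat.testBit_two_pow_add_gt hij]
      simp [Nat.ne_of_lt hij]
    · subst hij
      have hkb : k.testBit i = false := Nat.testBit_lt_two_pow hk
      rw [Nat.testBit_two_pow_add_eq, hkb]
      simp
    · have h1 : (2 ^ j + k).testBit i = false := by
        refine Nat.testBit_lt_two_pow ?_
        calc 2 ^ j + k < 2 ^ j + 2 ^ j := by omega
          _ = 2 ^ (j + 1) := by ring
          _ ≤ 2 ^ i := Nat.pow_le_pow_right (by norm_num) hij
      have h2 : k.testBit i = false :=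
        Nat.testBit_lt_two_pow (lt_of_lt_of_le hk (Nat.pow_le_pow_right (by norm_num) hij.le))
      simp [h1, h2, Nat.ne_of_gt hij]
  rw [Finset.prod_congr rfl key, Finset.prod_mul_distrib, Finset.prod_ite_eq' (range (2 ^ j + k)) j (fun _ => rad j x)]
  simp [mem_range.2 hj]

lemma dirichlet_two_pow (j : ℕ) (x : G) :
    dirichlet (2 ^ j) x = ∏ i ∈ range j, (1 + rad i x) := by
  induction j with
  | zero => simp [dirichlet, walsh]
  | succ j ih =>
    have h2 : (2 : ℕ) ^ (j + 1) = 2 ^ j + 2 ^ j := by ring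
    rw [Finset.prod_range_succ, ← ih]
    unfold dirichlet
    rw [h2, Finset.sum_range_add]
    have : ∀ i ∈ range (2 ^ j), walsh (2 ^ j + i) x = rad j x * walsh i x := by
      intro i hi
      exact walsh_two_pow_add (mem_range.1 hi) x
    rw [Finset.sum_congr rfl this, ← Finset.mul_sum]
    ring

lemma dirichlet_two_pow_eq_zero {s j : ℕ} {x : G} (h : x s = 1) (hsj : s < j) :
    dirichlet (2 ^ j) x = 0 := by
  rw [dirichlet_two_pow]
  refine Finset.prod_eq_zero (mem_range.2 hsj) ?_
  rw [rad_eq_neg_one h]; ring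

lemma abs_dirichlet_le (n : ℕ) (x : G) : |dirichlet n x| ≤ (n : ℝ) := by
  unfold dirichlet
  calc |∑ k ∈ range n, walsh k x| ≤ ∑ k ∈ range n, |walsh k x| :=
        Finset.abs_sum_le_sum_abs _ _
    _ ≤ ∑ k ∈ range n, 1 := Finset.sum_le_sum (fun i _ => abs_walsh_le_one i x)
    _ = (n : ℝ) := by simp

lemma dirichlet_split {j m : ℕ} (hm : m < 2 ^ j) (x : G) :
    dirichlet (2 ^ j + m) x = dirichlet (2 ^ j) x + rad j x * dirichlet m x := by
  unfold dirichlet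
  rw [Finset.sum_range_add]
  congr 1
  rw [Finset.mul_sum]
  refine Finset.sum_congr rfl (fun i hi => ?_)
  exact walsh_two_pow_add (lt_trans (mem_range.1 hi) hm) x

lemma dirichlet_bound {s : ℕ} {x : G} (h : x s = 1) :
    ∀ n : ℕ, |dirichlet n x| ≤ (2 : ℝ) ^ (s + 1) - 1 := by
  intro n
  induction n using Nat.strong_induction_on with
  | _ n ih =>
    rcases Nat.eq_zero_or_pos n with rfl | hn
    · simp only [dirichlet, Finset.range_zero, Finset.sum_empty, abs_zero]
      have : (1:ℝ) ≤ 2 ^ (s+1) := one_le_pow₀ (by norm_num)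
      linarith
    · set j := Nat.log 2 n with hj
      have h1 : 2 ^ j ≤ n := Nat.pow_log_le_self 2 hn.ne'
      have h2 : n < 2 ^ (j + 1) := Nat.lt_pow_succ_log_self (by norm_num) n
      set m := n - 2 ^ j with hmdef
      have hm : m < 2 ^ j := by
        have : (2:ℕ) ^ (j+1) = 2 ^ j + 2 ^ j := by ring
        omega
      have hnm : n = 2 ^ j + m := by omega
      rw [hnm, dirichlet_split hm x]
      rcases le_or_gt j s with hjs | hjs
      · have b1 : |dirichlet (2 ^ j) x| ≤ ((2 ^ j : ℕ) : ℝ) := abs_dirichlet_le _ x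
        have b2 : |rad j x * dirichlet m x| ≤ (m : ℝ) := by
          rw [abs_mul, abs_rad, one_mul]; exact abs_dirichlet_le m x
        have e1 : ((2 ^ j : ℕ) : ℝ) ≤ (2:ℝ) ^ s := by
          push_cast
          exact pow_le_pow_right₀ (by norm_num) hjs
        have e2 : (m : ℝ) + 1 ≤ ((2 ^ j : ℕ) : ℝ) := by exact_mod_cast hm
        have e3 : (2:ℝ) ^ (s+1) = 2 ^ s + 2 ^ s := by ring
        calc |dirichlet (2^j) x + rad j x * dirichlet m x|
            ≤ |dirichlet (2^j) x| + |rad j x * dirichlet m x| := abs_add_le _ _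
          _ ≤ ((2 ^ j : ℕ) : ℝ) + (m:ℝ) := add_le_add b1 b2
          _ ≤ _ := by linarith
      · rw [dirichlet_two_pow_eq_zero h hjs, zero_add, abs_mul, abs_rad, one_mul]
        exact ih m (by omega)

lemma cyl_zero_eq_univ (x : G) : cyl 0 x = Set.univ := by
  ext y; simp [cyl]

lemma isFiniteMeasure_of_haar {μ : Measure G} (hμ : IsHaarG μ) : IsFiniteMeasure μ := by
  constructor
  rw [← cyl_zero_eq_univ 0, hμ 0 0]
  simp

lemma measurableSet_cyl (n : ℕ) (x : G) : MeasurableSet (cyl n x) := by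
  have : cyl n x = ⋂ j ∈ Set.Iio n, (fun y : G => y j) ⁻¹' {x j} := by
    ext y; simp [cyl]
  rw [this]
  exact MeasurableSet.biInter (Set.to_countable _) (fun j _ => (measurable_pi_apply j) (measurableSet_singleton _))

lemma integrable_bdd {μ : Measure G} [IsFiniteMeasure μ] {f : G → ℝ} (hf : Measurable f)
    {C : ℝ} (h : ∀ t, |f t| ≤ C) : Integrable f μ :=
  (integrable_const C).mono' hf.aestronglyMeasurable
    (ae_of_all _ (fun t => by simpa [Real.norm_eq_abs] using h t))

lemma psum_eq_kernel {μ : Measure G} [IsFiniteMeasure μ] {a : G → ℝ} (ha : Measurable a)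
    {C : ℝ} (hC : ∀ t, |a t| ≤ C) (n : ℕ) (x : G) :
    psum μ n a x = ∫ t, a t * dirichlet n (x + t) ∂μ := by
  unfold psum coef
  have h1 : ∀ k, (∫ t, a t * walsh k t ∂μ) * walsh k x
      = ∫ t, a t * walsh k t * walsh k x ∂μ := by
    intro k
    rw [← integral_mul_const]
  simp_rw [h1]
  rw [← integral_finset_sum]
  · congr 1
    funext t
    rw [dirichlet, Finset.mul_sum]
    refine Finset.sum_congr rfl (fun k _ => ?_)
    rw [walsh_add]
    ring
  · intro k _
    refine integrable_bdd ((ha.mul (measurable_walsh k)).mul_const _) (C := C * 1 * 1) ?_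
    intro t
    rw [abs_mul, abs_mul]
    have h2 : |a t| * |walsh k t| ≤ C * 1 := by
      refine mul_le_mul (hC t) (abs_walsh_le_one k t) (abs_nonneg _) ?_
      exact le_trans (abs_nonneg _) (hC t)
    refine mul_le_mul h2 (abs_walsh_le_one k x) (abs_nonneg _) ?_
    have : (0:ℝ) ≤ C := le_trans (abs_nonneg _) (hC x); linarith

lemma abs_integral_le {μ : Measure G} (hμ : IsHaarG μ) {f : G → ℝ} {M : ℕ} {C : ℝ}
    (hsupp : ∀ t, t ∉ Icyl M → f t = 0) (hbd : ∀ t ∈ Icyl M, |f t| ≤ C) :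
    |∫ t, f t ∂μ| ≤ C * 2⁻¹ ^ M := by
  have hfin : μ (Icyl M) < ⊤ := by
    rw [Icyl, hμ]
    exact lt_of_le_of_lt le_rfl (by
      exact ENNReal.pow_lt_top (by simp [ENNReal.inv_lt_top]))
  rw [← setIntegral_eq_integral_of_forall_compl_eq_zero hsupp]
  have := norm_setIntegral_le_of_norm_le_const hfin
    (fun t ht => by simpa [Real.norm_eq_abs] using hbd t ht) (f := f)
  rw [Real.norm_eq_abs] at this
  refine le_trans this ?_
  rw [measureReal_def, Icyl, hμ]
  rw [ENNReal.toReal_pow]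
  simp

/-- Weighted pointwise estimate on atoms in the middle range: for a `p`-atom `a` on `I_M`,
`n ≥ 2^M`, and `x ∈ I_s \ I_{s+1}` with `[n] ≤ s ≤ M - 1`, one has
`|S_n a(x)|/2^{ρ(n)(1/p-1)} ≤ c_p 2^{[n](1/p-1)+s} ≤ c_p 2^{s/p}`. -/
theorem stmt19 (μ : Measure G) (hμ : IsHaarG μ) (p : ℝ) (hp0 : 0 < p) (hp1 : p < 1) :
    ∃ c : ℝ, 0 < c ∧ ∀ (M : ℕ) (a : G → ℝ), IsPAtom μ p M a →
      ∀ n : ℕ, 2 ^ M ≤ n → ∀ s : ℕ, lo n ≤ s → s + 1 ≤ M →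
      ∀ x ∈ Icyl s \ Icyl (s + 1),
        |psum μ n a x| / 2 ^ ((rho n : ℝ) * (1 / p - 1))
            ≤ c * 2 ^ ((lo n : ℝ) * (1 / p - 1) + s) ∧
        c * 2 ^ ((lo n : ℝ) * (1 / p - 1) + s) ≤ c * 2 ^ ((s : ℝ) / p) := by
  haveI := isFiniteMeasure_of_haar hμ
  refine ⟨2, by norm_num, ?_⟩
  intro M a hA n hn s hlos hsM x hx
  obtain ⟨ha, hsupp, -, hbd⟩ := hA
  set α : ℝ := 1 / p - 1 with hα
  have hαpos : 0 < α := by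
    rw [hα]
    have : 1 < 1 / p := one_lt_one_div hp0 hp1
    linarith
  -- x s = 1
  have hxs1 : x s = 1 := by
    obtain ⟨hx1, hx2⟩ := hx
    have hne : x s ≠ 0 := by
      intro h0
      exact hx2 (fun j hj => by
        rcases Nat.lt_succ_iff_lt_or_eq.1 hj with hj' | rfl
        · exact hx1 j hj'
        · exact h0)
    rcases zmod2_cases (x s) with h | h
    · exact absurd h hne
    · exact h
  -- kernel bound
  have hker : ∀ t ∈ Icyl M, |dirichlet n (x + t)| ≤ (2:ℝ) ^ (s + 1) := by
    intro t ht
    have hts : t s = 0 := ht s (by omega)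
    have : (x + t) s = 1 := by
      show x s + t s = 1
      rw [hxs1, hts, add_zero]
    have := dirichlet_bound this n
    linarith
  -- main integral bound
  have hpsum : |psum μ n a x| ≤ (2:ℝ) ^ ((M:ℝ)/p) * 2 ^ (s+1) * 2⁻¹ ^ M := by
    rw [psum_eq_kernel ha hbd n x]
    refine abs_integral_le hμ (fun t ht => by rw [hsupp t ht, zero_mul]) ?_
    intro t ht
    rw [abs_mul]
    have h0 : (0:ℝ) ≤ 2 ^ ((M:ℝ)/p) := le_of_lt (Real.rpow_pos_of_pos two_pos _)
    exact mul_le_mul (hbd t) (hker t ht) (abs_nonneg _) h0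
  -- rewrite RHS as rpow
  have hB : (2:ℝ) ^ ((M:ℝ)/p) * 2 ^ (s+1) * 2⁻¹ ^ M
      = (2:ℝ) ^ ((M:ℝ)/p + (s+1) - M) := by
    rw [show ((2:ℝ)⁻¹ ^ M) = ((2:ℝ) ^ M)⁻¹ by rw [inv_pow],
        ← Real.rpow_natCast (2:ℝ) (s+1), ← Real.rpow_natCast (2:ℝ) M,
        ← Real.rpow_neg (by norm_num), ← Real.rpow_add (by norm_num),
        ← Real.rpow_add (by norm_num)]
    congr 1
    push_cast
    ring
  -- hi and lo facts
  have hn0 : n ≠ 0 := by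
    have := Nat.two_pow_pos M
    omega
  have hhi : M ≤ hi n := Nat.le_log_of_pow_le (by norm_num) hn
  have hlohi : lo n ≤ hi n := padicValNat_le_nat_log n
  have hrho : ((M:ℝ) - lo n) ≤ (rho n : ℝ) := by
    rw [rho, Nat.cast_sub hlohi]
    have : (M:ℝ) ≤ hi n := by exact_mod_cast hhi
    linarith
  have hden2 : (2:ℝ) ^ (((M:ℝ) - lo n) * α) ≤ 2 ^ ((rho n : ℝ) * α) :=
    Real.rpow_le_rpow_of_exponent_le one_le_two
      (mul_le_mul_of_nonneg_right hrho hαpos.le)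
  constructor
  · calc |psum μ n a x| / 2 ^ ((rho n : ℝ) * α)
        ≤ |psum μ n a x| / 2 ^ (((M:ℝ) - lo n) * α) := by
          gcongr
      _ ≤ ((2:ℝ) ^ ((M:ℝ)/p + (s+1) - M)) / 2 ^ (((M:ℝ) - lo n) * α) := by
          rw [← hB]; gcongr
      _ = 2 * 2 ^ ((lo n : ℝ) * α + s) := by
          rw [← Real.rpow_sub (by norm_num)]
          rw [show (2:ℝ) * 2 ^ ((lo n : ℝ) * α + s) = 2 ^ (1:ℝ) * 2 ^ ((lo n : ℝ) * α + s) by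
            rw [Real.rpow_one],
            ← Real.rpow_add (by norm_num)]
          congr 1
          simp only [hα]
          ring
  · have hcast : (lo n : ℝ) ≤ s := by exact_mod_cast hlos
    have h1 : (lo n : ℝ) * α ≤ (s:ℝ) * α := mul_le_mul_of_nonneg_right hcast hαpos.le
    have hexp : (lo n : ℝ) * α + s ≤ (s:ℝ) / p := by
      calc (lo n : ℝ) * α + s ≤ (s:ℝ) * α + s := by linarith
        _ = (s:ℝ) / p := by rw [hα]; ring
    have := Real.rpow_le_rpow_of_exponent_le one_le_two hexp
    linarith

end
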